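/- arXiv:2210.08911 — 4 statements merged into one kernel-verified Lean document; each statement's English description precedes it below -/
import Mathlib

section
/- Let q > 1 and ε ≥ 0. Let U be a countable set, let μ and μ' be probability measures on U with μ ≪ μ', and for each u ∈ U let ν_u and ν'_u be probability measures on ℝ^d with ν_u ≪ ν'_u and R_q(ν_u ‖ ν'_u) ≤ ε. Define joint probability measures P and P' on U × ℝ^d by P({u} × A) = μ({u}) ν_u(A) and P'({u} × A) = μ'({u}) ν'_u(A) for measurable A ⊆ ℝ^d. Then R_q(P ‖ P') ≤ ε + R_q(μ ‖ μ'). -/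
/-!
The density of `P` with respect to `P'` is `(u, x) ↦ (dμ/dμ') u * (dν u/dν' u) x`, so the
moment `∫ (dP/dP')^q dP'` is `∑ u, (dμ/dμ') u ^ q * μ' {u} * J u`, where
`J u = ∫ (dν u/dν' u)^q d(ν' u)`. Each `J u` lies in `[1, exp ((q - 1) ε)]`, which puts the
moment between `∫ (dμ/dμ')^q dμ'` and `exp ((q - 1) ε)` times it; taking logarithms gives the
bound. Since `renyiDiv` reads an infinite moment as `log 0 = 0`, the hypothesis on `ν u` bounds
`J u` only when it is finite; the `u` with `J u = ∞` carry zero weight once the joint moment is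
finite, and when the joint moment is infinite the left-hand side is `0`.
-/

open MeasureTheory ProbabilityTheory

/-- Rényi divergence of order `q` of `μ` with respect to `ν`:
`R_q(μ‖ν) = (1/(q−1)) log ∫ (dμ/dν)^q dν`. -/
noncomputable def renyiDiv {α : Type*} [MeasurableSpace α] (q : ℝ) (μ ν : Measure α) : ℝ :=
  (q - 1)⁻¹ * Real.log (∫ x, ((μ.rnDeriv ν x).toReal) ^ q ∂ν)

open scoped ENNReal

section Renyi

variable {α : Type*} [MeasurableSpace α] {q : ℝ} {μ ν : Measure α}

/-- `renyiDiv q μ ν` is `(q - 1)⁻¹ * log` of the real part of this, hence the junk value `0`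
when it is `∞`. -/
noncomputable def renyiMoment (q : ℝ) (μ ν : Measure α) : ℝ≥0∞ :=
  ∫⁻ x, μ.rnDeriv ν x ^ q ∂ν

lemma renyiDiv_eq_log_renyiMoment [SigmaFinite μ] (hq : 0 ≤ q) :
    renyiDiv q μ ν = (q - 1)⁻¹ * Real.log (renyiMoment q μ ν).toReal := by
  have hfin : ∀ᵐ x ∂ν, μ.rnDeriv ν x ^ q < ∞ := by
    filter_upwards [μ.rnDeriv_lt_top ν] with x hx
    exact ENNReal.rpow_lt_top_of_nonneg hq hx.ne
  rw [renyiDiv, renyiMoment,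
    ← integral_toReal ((μ.measurable_rnDeriv ν).pow_const q).aemeasurable hfin]
  simp only [ENNReal.toReal_rpow]

lemma one_le_renyiMoment [IsProbabilityMeasure μ] [IsProbabilityMeasure ν] (hq : 1 ≤ q)
    (hμν : μ ≪ ν) : 1 ≤ renyiMoment q μ ν := by
  -- `‖dμ/dν‖₁ ≤ ‖dμ/dν‖_q` on the probability space `ν`, and `‖dμ/dν‖₁ = μ univ = 1`
  have h := eLpNorm'_le_eLpNorm'_of_exponent_le one_pos hq ν
    (μ.measurable_rnDeriv ν).aestronglyMeasurable
  simp only [eLpNorm', enorm_eq_self, ENNReal.rpow_one, div_one, Measure.lintegral_rnDeriv hμν,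
    measure_univ] at h
  by_contra! hlt
  exact h.not_gt (ENNReal.rpow_lt_one hlt (by positivity))

lemma renyiDiv_nonneg [IsProbabilityMeasure μ] [IsProbabilityMeasure ν] (hq : 1 ≤ q)
    (hμν : μ ≪ ν) : 0 ≤ renyiDiv q μ ν := by
  rw [renyiDiv_eq_log_renyiMoment (by linarith)]
  refine mul_nonneg (inv_nonneg.2 (sub_nonneg.2 hq)) ?_
  obtain htop | hfin := eq_or_ne (renyiMoment q μ ν) ∞
  · simp [htop]
  · exact Real.log_nonneg (by simpa using ENNReal.toReal_mono hfin (one_le_renyiMoment hq hμν))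

lemma ofReal_exp_renyiDiv [SigmaFinite μ] (hq : 1 < q) (h0 : renyiMoment q μ ν ≠ 0)
    (htop : renyiMoment q μ ν ≠ ∞) :
    ENNReal.ofReal (Real.exp ((q - 1) * renyiDiv q μ ν)) = renyiMoment q μ ν := by
  rw [renyiDiv_eq_log_renyiMoment (by linarith), ← mul_assoc, mul_inv_cancel₀ (by linarith),
    one_mul, Real.exp_log (ENNReal.toReal_pos h0 htop), ENNReal.ofReal_toReal htop]

lemma renyiDiv_le_iff [SigmaFinite μ] (hq : 1 < q) (h0 : renyiMoment q μ ν ≠ 0)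
    (htop : renyiMoment q μ ν ≠ ∞) {c : ℝ} :
    renyiDiv q μ ν ≤ c ↔ renyiMoment q μ ν ≤ ENNReal.ofReal (Real.exp ((q - 1) * c)) := by
  rw [← ofReal_exp_renyiDiv hq h0 htop, ENNReal.ofReal_le_ofReal_iff (Real.exp_pos _).le,
    Real.exp_le_exp, mul_le_mul_iff_right₀ (by linarith)]

lemma renyiDiv_le_add_of_renyiMoment_le_mul {β : Type*} [MeasurableSpace β] {ρ σ : Measure β}
    [SigmaFinite μ] [SigmaFinite ρ] (hq : 1 < q) (h0 : renyiMoment q μ ν ≠ 0)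
    (hle : renyiMoment q μ ν ≤ renyiMoment q ρ σ) (htop : renyiMoment q ρ σ ≠ ∞) {c : ℝ}
    (h : renyiMoment q ρ σ ≤ ENNReal.ofReal (Real.exp ((q - 1) * c)) * renyiMoment q μ ν) :
    renyiDiv q ρ σ ≤ c + renyiDiv q μ ν := by
  rwa [renyiDiv_le_iff hq (h0.bot_lt.trans_le hle).ne' htop, mul_add, Real.exp_add,
    ENNReal.ofReal_mul (Real.exp_pos _).le,
    ofReal_exp_renyiDiv hq h0 (ne_top_of_le_ne_top htop hle)]

end Renyi

lemma tsum_mul_le_mul_tsum_of_le_of_ne_top {ι : Type*} {w J : ι → ℝ≥0∞} {C : ℝ≥0∞}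
    (hJ : ∀ i, J i ≠ ∞ → J i ≤ C) (h : ∑' i, w i * J i ≠ ∞) :
    ∑' i, w i * J i ≤ C * ∑' i, w i := by
  rw [← ENNReal.tsum_mul_left]
  refine ENNReal.tsum_le_tsum fun i => ?_
  obtain hJi | hJi := eq_or_ne (J i) ∞
  · have hw : w i = 0 := by
      by_contra hw
      refine h (top_unique ?_)
      rw [← ENNReal.mul_top hw, ← hJi]
      exact ENNReal.le_tsum i
    simp [hw]
  · rw [mul_comm C]
    exact mul_le_mul_right (hJ i hJi) _

section DiscreteCompProd

variable {U X : Type*} [MeasurableSpace U] [MeasurableSpace X]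

/-- The composition product of `μ` with the kernel `ν` over a discrete `U`, written as a countable
sum so that integrals against it become sums over `U`. -/
noncomputable def discreteCompProd (μ : Measure U) (ν : U → Measure X) : Measure (U × X) :=
  Measure.sum fun u => μ {u} • (ν u).map (Prod.mk u)

variable [MeasurableSingletonClass U] {μ μ' : Measure U} {ν ν' : U → Measure X}

lemma lintegral_discreteCompProd (g : U × X → ℝ≥0∞) :
    ∫⁻ p, g p ∂discreteCompProd μ ν = ∑' u, μ {u} * ∫⁻ x, g (u, x) ∂ν u := by
  simp only [discreteCompProd, lintegral_sum_measure, lintegral_smul_measure, smul_eq_mul,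
    (measurableEmbedding_prodMk_left _).lintegral_map]

lemma discreteCompProd_apply {S : Set (U × X)} (hS : MeasurableSet S) :
    discreteCompProd μ ν S = ∑' u, μ {u} * ν u (Prod.mk u ⁻¹' S) := by
  simp only [discreteCompProd, Measure.sum_apply _ hS, Measure.smul_apply, smul_eq_mul,
    (measurableEmbedding_prodMk_left _).map_apply]

lemma rnDeriv_mul_measure_singleton [Measure.HaveLebesgueDecomposition μ μ'] (hμ : μ ≪ μ')
    (u : U) :
    μ.rnDeriv μ' u * μ' {u} = μ {u} := by
  rw [← lintegral_singleton, Measure.setLIntegral_rnDeriv' hμ (measurableSet_singleton u)]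

lemma discreteCompProd_eq_withDensity [Measure.HaveLebesgueDecomposition μ μ']
    [∀ u, SigmaFinite (ν u)] [∀ u, SigmaFinite (ν' u)] (hμ : μ ≪ μ') (hν : ∀ u, ν u ≪ ν' u) :
    discreteCompProd μ ν = (discreteCompProd μ' ν').withDensity
      fun p => μ.rnDeriv μ' p.1 * (ν p.1).rnDeriv (ν' p.1) p.2 := by
  ext S hS
  rw [withDensity_apply _ hS, discreteCompProd_apply hS, ← lintegral_indicator hS,
    lintegral_discreteCompProd]
  refine tsum_congr fun u => ?_
  have hslice : MeasurableSet (Prod.mk u ⁻¹' S) := measurable_prodMk_left hS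
  have hind : (fun x => S.indicator
        (fun p => μ.rnDeriv μ' p.1 * (ν p.1).rnDeriv (ν' p.1) p.2) (u, x))
      = (Prod.mk u ⁻¹' S).indicator fun x => μ.rnDeriv μ' u * (ν u).rnDeriv (ν' u) x :=
    rfl
  rw [hind, lintegral_indicator hslice, lintegral_const_mul _ (Measure.measurable_rnDeriv _ _),
    Measure.setLIntegral_rnDeriv' (hν u) hslice, ← mul_assoc, mul_comm (μ' {u}),
    rnDeriv_mul_measure_singleton hμ]

variable [Countable U]

lemma eq_discreteCompProd_of_apply_singleton_prod {P : Measure (U × X)}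
    (hP : ∀ u A, MeasurableSet A → P ({u} ×ˢ A) = μ {u} * ν u A) :
    P = discreteCompProd μ ν := by
  ext S hS
  have hslice (u : U) : MeasurableSet (Prod.mk u ⁻¹' S) := measurable_prodMk_left hS
  have hS_eq : S = ⋃ u, {u} ×ˢ (Prod.mk u ⁻¹' S) := by
    ext ⟨u, x⟩
    simp
  rw [discreteCompProd_apply hS, ← tsum_congr fun u => hP u _ (hslice u)]
  conv_lhs => rw [hS_eq]
  exact measure_iUnion
    (fun u v huv => Set.disjoint_prod.2 (Or.inl (Set.disjoint_singleton.2 huv)))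
    fun u => (measurableSet_singleton u).prod (hslice u)

lemma rnDeriv_discreteCompProd [Measure.HaveLebesgueDecomposition μ μ']
    [∀ u, SigmaFinite (ν u)] [∀ u, SigmaFinite (ν' u)] [SigmaFinite (discreteCompProd μ' ν')]
    (hμ : μ ≪ μ') (hν : ∀ u, ν u ≪ ν' u) :
    (discreteCompProd μ ν).rnDeriv (discreteCompProd μ' ν') =ᵐ[discreteCompProd μ' ν']
      fun p => μ.rnDeriv μ' p.1 * (ν p.1).rnDeriv (ν' p.1) p.2 := by
  rw [discreteCompProd_eq_withDensity hμ hν]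
  exact Measure.rnDeriv_withDensity _ (measurable_from_prod_countable_right fun u =>
    (Measure.measurable_rnDeriv (ν u) (ν' u)).const_mul (μ.rnDeriv μ' u))

lemma renyiMoment_discreteCompProd {q : ℝ} [Measure.HaveLebesgueDecomposition μ μ']
    [∀ u, SigmaFinite (ν u)] [∀ u, SigmaFinite (ν' u)] [SigmaFinite (discreteCompProd μ' ν')]
    (hq : 0 ≤ q) (hμ : μ ≪ μ') (hν : ∀ u, ν u ≪ ν' u) :
    renyiMoment q (discreteCompProd μ ν) (discreteCompProd μ' ν')
      = ∑' u, μ.rnDeriv μ' u ^ q * μ' {u} * renyiMoment q (ν u) (ν' u) := by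
  rw [renyiMoment, lintegral_congr_ae ((rnDeriv_discreteCompProd hμ hν).mono fun p hp => by
    rw [hp]), lintegral_discreteCompProd]
  refine tsum_congr fun u => ?_
  simp_rw [ENNReal.mul_rpow_of_nonneg _ _ hq]
  rw [lintegral_const_mul _ ((Measure.measurable_rnDeriv _ _).pow_const q), renyiMoment]
  ring

end DiscreteCompProd

/-- **Composition bound for Rényi divergence.** Let `q > 1` and `ε ≥ 0`. Let `U` be a
countable set, `μ ≪ μ'` probability measures on `U`, and for each `u` let `ν u ≪ ν' u` be
probability measures on `ℝ^d` with `R_q(ν u ‖ ν' u) ≤ ε`. If `P` and `P'` are the joint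
probability measures on `U × ℝ^d` determined by `P({u} × A) = μ{u} · ν u (A)` and
`P'({u} × A) = μ'{u} · ν' u (A)`, then `R_q(P ‖ P') ≤ ε + R_q(μ ‖ μ')`. -/
theorem renyiDiv_joint_le {U : Type*} [MeasurableSpace U] [MeasurableSingletonClass U]
    [Countable U] {d : ℕ} (q ε : ℝ) (hq : 1 < q) (hε : 0 ≤ ε)
    (μ μ' : Measure U) [IsProbabilityMeasure μ] [IsProbabilityMeasure μ']
    (hac : μ ≪ μ')
    (ν ν' : U → Measure (EuclideanSpace ℝ (Fin d)))
    (hνprob : ∀ u, IsProbabilityMeasure (ν u))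
    (hν'prob : ∀ u, IsProbabilityMeasure (ν' u))
    (hνac : ∀ u, ν u ≪ ν' u)
    (hνdiv : ∀ u, renyiDiv q (ν u) (ν' u) ≤ ε)
    (P P' : Measure (U × EuclideanSpace ℝ (Fin d)))
    [IsProbabilityMeasure P] [IsProbabilityMeasure P']
    (hP : ∀ (u : U) (A : Set (EuclideanSpace ℝ (Fin d))), MeasurableSet A →
      P ({u} ×ˢ A) = μ {u} * ν u A)
    (hP' : ∀ (u : U) (A : Set (EuclideanSpace ℝ (Fin d))), MeasurableSet A →
      P' ({u} ×ˢ A) = μ' {u} * ν' u A) :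
    renyiDiv q P P' ≤ ε + renyiDiv q μ μ' := by
  obtain rfl := eq_discreteCompProd_of_apply_singleton_prod hP
  obtain rfl := eq_discreteCompProd_of_apply_singleton_prod hP'
  have := hνprob
  have := hν'prob
  have hJ_one (u : U) : 1 ≤ renyiMoment q (ν u) (ν' u) := one_le_renyiMoment hq.le (hνac u)
  have hJ_le (u : U) (hJ : renyiMoment q (ν u) (ν' u) ≠ ∞) :
      renyiMoment q (ν u) (ν' u) ≤ ENNReal.ofReal (Real.exp ((q - 1) * ε)) :=
    (renyiDiv_le_iff hq (one_pos.trans_le (hJ_one u)).ne' hJ).1 (hνdiv u)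
  have hI : renyiMoment q (discreteCompProd μ ν) (discreteCompProd μ' ν')
      = ∑' u, μ.rnDeriv μ' u ^ q * μ' {u} * renyiMoment q (ν u) (ν' u) :=
    renyiMoment_discreteCompProd (by linarith) hac hνac
  have hIμ : renyiMoment q μ μ' = ∑' u, μ.rnDeriv μ' u ^ q * μ' {u} := lintegral_countable' _
  obtain hI_top | hI_ne_top :=
    eq_or_ne (renyiMoment q (discreteCompProd μ ν) (discreteCompProd μ' ν')) ∞
  · -- the left-hand side is the junk value `0`
    rw [renyiDiv_eq_log_renyiMoment (by linarith), hI_top]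
    simpa using add_nonneg hε (renyiDiv_nonneg hq.le hac)
  have hIμ_le :
      renyiMoment q μ μ' ≤ renyiMoment q (discreteCompProd μ ν) (discreteCompProd μ' ν') := by
    rw [hIμ, hI]
    exact ENNReal.tsum_le_tsum fun u => le_mul_of_one_le_right' (hJ_one u)
  refine renyiDiv_le_add_of_renyiMoment_le_mul hq
    (one_pos.trans_le (one_le_renyiMoment hq.le hac)).ne' hIμ_le hI_ne_top ?_
  rw [hI, hIμ]
  rw [hI] at hI_ne_top
  exact tsum_mul_le_mul_tsum_of_le_of_ne_top hJ_le hI_ne_top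
end

section
/- Let f: ℝ^d → ℝ be twice continuously differentiable and convex, and let L > 0. If g: ℝ^d → ℝ is a differentiable function whose gradient satisfies ∇g(θ) = Clip_L(∇f(θ)) for all θ ∈ ℝ^d, then g is convex. -/
open MeasureTheory

/-- `Clip_L v = v / max(1, ‖v‖/L)`: the orthogonal projection of `v` onto
the closed ball of radius `L` centered at the origin. -/
noncomputable def clip {E : Type*} [NormedAddCommGroup E] [NormedSpace ℝ E]
    (L : ℝ) (v : E) : E :=
  (max 1 (‖v‖ / L))⁻¹ • v

/-!
Where `‖∇f‖ > L`, the gradient of `g` is `L ∇f / ‖∇f‖`, whose derivative is `(L / ‖∇f‖) P H`,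
with `H` the positive Hessian of `f` and `P` the orthogonal projection onto `(∇f)ᗮ`. This map is
the Hessian of `g`, hence symmetric, which forces `P H = P H P`; so it is positive. Along any line,
`t ↦ ⟪∇g (x + t u), u⟫` therefore has a nonnegative derivative off the closed set where
`‖∇f‖ ≤ L`, and on that set it agrees with the nondecreasing `t ↦ ⟪∇f (x + t u), u⟫`. Continuity
glues the pieces into a nondecreasing function, and `g` is convex on every line.
-/

open InnerProductSpace Set Filter Topology

section Clip

variable {E : Type*} [NormedAddCommGroup E] [NormedSpace ℝ E] {L : ℝ} {v : E}

theorem clip_of_norm_le (hL : 0 < L) (h : ‖v‖ ≤ L) : clip L v = v := by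
  rw [clip, max_eq_left ((div_le_one hL).2 h), inv_one, one_smul]

theorem clip_of_lt_norm (hL : 0 < L) (h : L < ‖v‖) : clip L v = (L / ‖v‖) • v := by
  rw [clip, max_eq_right ((one_le_div hL).2 h.le), inv_div]

theorem continuous_clip (L : ℝ) : Continuous (clip (E := E) L) :=
  ((continuous_const.max (continuous_norm.div_const L)).inv₀
    fun _ => (zero_lt_one.trans_le (le_max_left _ _)).ne').smul continuous_id

end Clip

theorem monotone_of_monotoneOn_of_hasDerivAt_nonneg {ψ : ℝ → ℝ} {s : Set ℝ} (hs : IsClosed s)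
    (hψ : Continuous ψ) (hmono : MonotoneOn ψ s)
    (hderiv : ∀ t ∉ s, ∃ c, HasDerivAt ψ c t ∧ 0 ≤ c) : Monotone ψ := by
  have hgap : ∀ a b, a ≤ b → (∀ r ∈ Ioo a b, r ∉ s) → ψ a ≤ ψ b := by
    intro a b hab hout
    refine monotoneOn_of_deriv_nonneg (convex_Icc a b) hψ.continuousOn (fun r hr => ?_)
      (fun r hr => ?_) (left_mem_Icc.2 hab) (right_mem_Icc.2 hab) hab
    all_goals
      rw [interior_Icc] at hr
      obtain ⟨c, hc, hc0⟩ := hderiv r (hout r hr)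
    · exact hc.differentiableAt.differentiableWithinAt
    · exact hc.deriv ▸ hc0
  intro t₁ t₂ h12
  set C := s ∩ Icc t₁ t₂
  rcases C.eq_empty_or_nonempty with hC | hC
  · exact hgap t₁ t₂ h12 fun r hr hrs => hC.subset ⟨hrs, Ioo_subset_Icc_self hr⟩
  have hCc : IsCompact C := isCompact_Icc.inter_left hs
  have ha := hCc.sInf_mem hC
  have hb := hCc.sSup_mem hC
  calc ψ t₁ ≤ ψ (sInf C) := hgap _ _ ha.2.1 fun r hr hrs =>
        hr.2.not_ge (csInf_le hCc.bddBelow ⟨hrs, hr.1.le, hr.2.le.trans ha.2.2⟩)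
    _ ≤ ψ (sSup C) := hmono ha.1 hb.1 (csInf_le_csSup hC hCc.bddBelow hCc.bddAbove)
    _ ≤ ψ t₂ := hgap _ _ hb.2.2 fun r hr hrs =>
        hr.1.not_ge (le_csSup hCc.bddAbove ⟨hrs, hb.2.1.trans hr.1.le, hr.2.le⟩)

section Derivatives

variable {E F : Type*} [NormedAddCommGroup E] [NormedSpace ℝ E] [NormedAddCommGroup F]

theorem HasFDerivAt.hasDerivAt_comp_add_smul [NormedSpace ℝ F] {G : E → F} {D : E →L[ℝ] F}
    {x u : E} {t : ℝ} (h : HasFDerivAt G D (x + t • u)) :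
    HasDerivAt (fun s : ℝ => G (x + s • u)) (D u) t := by
  simpa [Function.comp_def] using h.comp_hasDerivAt t (((hasDerivAt_id t).smul_const u).const_add x)

variable [InnerProductSpace ℝ F]

theorem HasFDerivAt.norm {f : E → F} {f' : E →L[ℝ] F} {x : E} (hf : HasFDerivAt f f' x)
    (h0 : f x ≠ 0) :
    HasFDerivAt (fun y => ‖f y‖) (‖f x‖⁻¹ • (innerSL ℝ (f x)).comp f') x := by
  have h := hf.norm_sq.sqrt (by positivity)
  simp only [Real.sqrt_sq (norm_nonneg _)] at h
  convert h using 1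
  ext w
  simp only [smul_apply, ContinuousLinearMap.comp_apply, coe_innerSL_apply, smul_eq_mul,
    nsmul_eq_mul, Nat.cast_ofNat]
  field_simp

theorem HasFDerivAt.inv_norm_smul {f : E → F} {f' : E →L[ℝ] F} {x : E} (hf : HasFDerivAt f f' x)
    (h0 : f x ≠ 0) :
    HasFDerivAt (fun y => ‖f y‖⁻¹ • f y) (‖f x‖⁻¹ • ((ℝ ∙ f x)ᗮ.starProjection ∘L f')) x := by
  have h : HasFDerivAt (fun y => ‖f y‖⁻¹ • f y) _ x :=
    ((hasDerivAt_inv (norm_ne_zero_iff.2 h0)).comp_hasFDerivAt x (hf.norm h0)).smul hf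
  convert h using 1
  ext w
  simp only [smul_apply, ContinuousLinearMap.comp_apply, Submodule.starProjection_orthogonal_val,
    Submodule.starProjection_singleton, Real.ringHom_apply, Function.comp_apply, add_apply,
    ContinuousLinearMap.smulRight_apply, coe_innerSL_apply, smul_eq_mul]
  module

theorem HasFDerivAt.clip {V : E → F} {H : E →L[ℝ] F} {x : E} {L : ℝ} (hV : HasFDerivAt V H x)
    (hL : 0 < L) (hx : L < ‖V x‖) :
    HasFDerivAt (fun y => clip L (V y)) ((L / ‖V x‖) • ((ℝ ∙ V x)ᗮ.starProjection ∘L H)) x := by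
  have h := (hV.inv_norm_smul (norm_pos_iff.1 (hL.trans hx))).const_smul L
  rw [smul_smul, ← div_eq_mul_inv] at h
  refine h.congr_of_eventuallyEq ?_
  filter_upwards [hV.continuousAt.norm.eventually (lt_mem_nhds hx)] with y hy
  rw [clip_of_lt_norm hL hy, Pi.smul_apply, smul_smul, div_eq_mul_inv]

end Derivatives

variable {E : Type*} [NormedAddCommGroup E] [InnerProductSpace ℝ E]

theorem ContinuousLinearMap.IsPositive.starProjection_comp {T : E →L[ℝ] E} (hT : T.IsPositive)
    (U : Submodule ℝ E) [U.HasOrthogonalProjection]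
    (h : (U.starProjection ∘L T : E →ₗ[ℝ] E).IsSymmetric) :
    (U.starProjection ∘L T).IsPositive := by
  have hPTP : U.starProjection ∘L T = U.starProjection ∘L T ∘L U.starProjection := by
    ext1 u
    refine ext_inner_right ℝ fun w => ?_
    simp only [ContinuousLinearMap.comp_apply]
    calc ⟪U.starProjection (T u), w⟫_ℝ = ⟪u, U.starProjection (T w)⟫_ℝ := h u w
      _ = ⟪u, U.starProjection (U.starProjection (T w))⟫_ℝ := by
        rw [U.starProjection_eq_self_iff.2 (U.starProjection_apply_mem _)]
      _ = ⟪U.starProjection u, U.starProjection (T w)⟫_ℝ :=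
        (U.inner_starProjection_left_eq_right _ _).symm
      _ = ⟪U.starProjection (T (U.starProjection u)), w⟫_ℝ := (h _ w).symm
  rw [hPTP]
  exact hT.conj_starProjection U

section Complete

variable [CompleteSpace E]

theorem HasGradientAt.hasDerivAt_comp_add_smul {g : E → ℝ} {g' x u : E} {t : ℝ}
    (h : HasGradientAt g g' (x + t • u)) :
    HasDerivAt (fun s : ℝ => g (x + s • u)) ⟪g', u⟫_ℝ t := by
  simpa using h.hasFDerivAt.hasDerivAt_comp_add_smul

theorem ContDiff.contDiff_gradient {f : E → ℝ} {n : WithTop ℕ∞} (hf : ContDiff ℝ (n + 1) f) :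
    ContDiff ℝ n (gradient f) :=
  (toDual ℝ E).symm.toContinuousLinearEquiv.contDiff.comp (hf.fderiv_right le_rfl)

theorem isSymmetric_of_eventually_hasGradientAt {g : E → ℝ} {G : E → E} {D : E →L[ℝ] E} {x : E}
    (hg : ∀ᶠ y in 𝓝 x, HasGradientAt g (G y) y) (hG : HasFDerivAt G D x) :
    (D : E →ₗ[ℝ] E).IsSymmetric := by
  intro v w
  have h := second_derivative_symmetric_of_eventually (hg.mono fun y hy => hy.hasFDerivAt)
    ((toDual ℝ E).toContinuousLinearEquiv.hasFDerivAt.comp x hG) v w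
  simpa [real_inner_comm] using h

theorem ConvexOn.monotone_inner_gradient {f : E → ℝ} (hf : ConvexOn ℝ univ f)
    (hd : Differentiable ℝ f) (x u : E) :
    Monotone fun t : ℝ => ⟪gradient f (x + t • u), u⟫_ℝ := by
  have hd' (t : ℝ) := (hd (x + t • u)).hasGradientAt.hasDerivAt_comp_add_smul
  have hline : ConvexOn ℝ univ fun t : ℝ => f (x + t • u) := by
    simpa [Function.comp_def, AffineMap.lineMap_apply, add_comm] using
      hf.comp_affineMap (AffineMap.lineMap x (x + u))
  intro a b hab
  simpa [(hd' a).deriv, (hd' b).deriv] using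
    hline.monotoneOn_deriv (fun t _ => (hd' t).differentiableAt) trivial trivial hab

theorem ConvexOn.isPositive_of_hasFDerivAt_gradient {f : E → ℝ} (hf : ConvexOn ℝ univ f)
    (hd : Differentiable ℝ f) {H : E →L[ℝ] E} {x : E} (hH : HasFDerivAt (gradient f) H x) :
    H.IsPositive := by
  refine H.isPositive_iff.2 ⟨isSymmetric_of_eventually_hasGradientAt
    (Eventually.of_forall fun y => (hd y).hasGradientAt) hH, fun w => ?_⟩
  have h : HasDerivAt (fun t : ℝ => ⟪gradient f (x + t • w), w⟫_ℝ) ⟪H w, w⟫_ℝ 0 := by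
    have hH0 : HasFDerivAt (gradient f) H (x + (0 : ℝ) • w) := by simpa using hH
    simpa using hH0.hasDerivAt_comp_add_smul.inner ℝ (hasDerivAt_const 0 w)
  exact h.deriv ▸ (hf.monotone_inner_gradient hd x w).deriv_nonneg

theorem convexOn_univ_of_monotone_inner_gradient {g : E → ℝ} (hg : Differentiable ℝ g)
    (hmono : ∀ x u, Monotone fun t : ℝ => ⟪gradient g (x + t • u), u⟫_ℝ) :
    ConvexOn ℝ univ g := by
  refine ⟨convex_univ, fun p _ q _ a b ha hb hab => ?_⟩
  have hd (t : ℝ) := (hg (p + t • (q - p))).hasGradientAt.hasDerivAt_comp_add_smul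
  have hline : ConvexOn ℝ univ fun t : ℝ => g (p + t • (q - p)) :=
    Monotone.convexOn_univ_of_deriv (fun t => (hd t).differentiableAt)
      ((funext fun t => (hd t).deriv) ▸ hmono p (q - p))
  have h := hline.2 (mem_univ 0) (mem_univ 1) ha hb hab
  obtain rfl : a = 1 - b := by linarith
  have e : (1 - b) • p + b • q = p + b • (q - p) := by module
  simpa [e] using h

theorem exists_isPositive_hasFDerivAt_clip {g : E → ℝ} {V : E → E} {H : E →L[ℝ] E} {x : E}
    {L : ℝ} (hH : H.IsPositive) (hV : HasFDerivAt V H x) (hL : 0 < L) (hx : L < ‖V x‖)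
    (hg : ∀ᶠ y in 𝓝 x, HasGradientAt g (clip L (V y)) y) :
    ∃ D : E →L[ℝ] E, HasFDerivAt (fun y => clip L (V y)) D x ∧ D.IsPositive := by
  have hD := hV.clip hL hx
  have hc : 0 < L / ‖V x‖ := div_pos hL (hL.trans hx)
  have hPH : ((ℝ ∙ V x)ᗮ.starProjection ∘L H : E →ₗ[ℝ] E).IsSymmetric := fun u w => by
    have h := isSymmetric_of_eventually_hasGradientAt hg hD u w
    simp only [ContinuousLinearMap.coe_coe, smul_apply, real_inner_smul_left,
      real_inner_smul_right] at h
    exact mul_left_cancel₀ hc.ne' h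
  exact ⟨_, hD, (hH.starProjection_comp _ hPH).smul_of_nonneg hc.le⟩

end Complete

/-- **Gradient clipping retains convexity.** If `f : ℝ^d → ℝ` is twice continuously
differentiable and convex, `L > 0`, and `g` is a differentiable function whose gradient
satisfies `∇g(θ) = Clip_L(∇f(θ))` for all `θ`, then `g` is convex. -/
theorem convexOn_of_gradient_eq_clip {d : ℕ} {L : ℝ} (hL : 0 < L)
    (f g : EuclideanSpace ℝ (Fin d) → ℝ)
    (hf : ContDiff ℝ 2 f) (hfconv : ConvexOn ℝ Set.univ f)
    (hg : Differentiable ℝ g)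
    (hgrad : ∀ θ, gradient g θ = clip L (gradient f θ)) :
    ConvexOn ℝ Set.univ g := by
  have hfd : Differentiable ℝ f := hf.differentiable two_ne_zero
  have hV : Differentiable ℝ (gradient f) :=
    (ContDiff.contDiff_gradient (n := 1) hf).differentiable one_ne_zero
  have hgG (y) : HasGradientAt g (clip L (gradient f y)) y := hgrad y ▸ (hg y).hasGradientAt
  refine convexOn_univ_of_monotone_inner_gradient hg fun x u => ?_
  simp only [hgrad]
  have hline : Continuous fun t : ℝ => gradient f (x + t • u) :=
    hV.continuous.comp (continuous_const.add (continuous_id.smul continuous_const))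
  refine monotone_of_monotoneOn_of_hasDerivAt_nonneg
    (isClosed_le hline.norm (continuous_const (y := L)))
    (((continuous_clip L).comp hline).inner continuous_const) ?_ fun t ht => ?_
  · refine ((hfconv.monotone_inner_gradient hfd x u).monotoneOn _).congr fun t ht => ?_
    rw [clip_of_norm_le hL ht]
  · obtain ⟨D, hD, hDpos⟩ := exists_isPositive_hasFDerivAt_clip
      (hfconv.isPositive_of_hasFDerivAt_gradient hfd (hV _).hasFDerivAt) (hV _).hasFDerivAt hL
      (not_le.1 ht) (Eventually.of_forall hgG)
    exact ⟨_, hD.hasDerivAt_comp_add_smul.inner ℝ (hasDerivAt_const t u), by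
      simpa using hDpos.inner_nonneg_left u⟩
end

section
/- Let λ, L > 0, let X be a set, and let ℓ(·;x): ℝ^d → ℝ be convex, differentiable, and L-Lipschitz for every x ∈ X. Let D = (x_1,…,x_n) and D' = (x'_1,…,x'_n) ∈ X^n be databases differing in at most r coordinates, and let θ*_D and θ*_{D'} be the (unique) global minimizers of L_D and L_{D'} respectively. Then ‖θ*_{D'} − θ*_D‖ ≤ 4rL/(λn). -/
open MeasureTheory

/-- The regularized empirical objective `L_D(θ) = (1/n) Σ_i ℓ(θ; x_i) + (λ/2)‖θ‖²`
for a database `D = (x_1, …, x_n)`. -/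
noncomputable def regObj {d n : ℕ} {X : Type*} (lam : ℝ)
    (ℓ : X → EuclideanSpace ℝ (Fin d) → ℝ) (D : Fin n → X)
    (θ : EuclideanSpace ℝ (Fin d)) : ℝ :=
  (1 / (n : ℝ)) * ∑ i, ℓ (D i) θ + lam / 2 * ‖θ‖ ^ 2

/-- Strong-convexity-at-the-minimizer inequality via the midpoint trick. -/
lemma regObj_strong_min {d n : ℕ} {X : Type*} {lam : ℝ}
    (ℓ : X → EuclideanSpace ℝ (Fin d) → ℝ)
    (hconv : ∀ x, ConvexOn ℝ Set.univ (ℓ x))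
    (D : Fin n → X) (θs θ' : EuclideanSpace ℝ (Fin d))
    (hθs : ∀ θ, regObj lam ℓ D θs ≤ regObj lam ℓ D θ) :
    lam / 8 * ‖θ' - θs‖ ^ 2 ≤ (regObj lam ℓ D θ' - regObj lam ℓ D θs) / 2 := by
  set m : EuclideanSpace ℝ (Fin d) := (1/2 : ℝ) • θs + (1/2 : ℝ) • θ' with hmdef
  have hnn : (0 : ℝ) ≤ 1 / (n : ℝ) := by positivity
  have hconvsum : ∑ i, ℓ (D i) m ≤ (1/2) * (∑ i, ℓ (D i) θs) + (1/2) * (∑ i, ℓ (D i) θ') := by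
    rw [Finset.mul_sum, Finset.mul_sum, ← Finset.sum_add_distrib]
    refine Finset.sum_le_sum fun i _ => ?_
    have := (hconv (D i)).2 (Set.mem_univ θs) (Set.mem_univ θ')
      (by norm_num : (0:ℝ) ≤ 1/2) (by norm_num : (0:ℝ) ≤ 1/2) (by norm_num)
    simpa [hmdef, smul_eq_mul] using this
  have h1 : ‖m‖ = (1/2) * ‖θs + θ'‖ := by
    rw [hmdef, ← smul_add, norm_smul]
    norm_num
  have hp := parallelogram_law_with_norm ℝ θs θ'
  have hrev : ‖θ' - θs‖ = ‖θs - θ'‖ := norm_sub_rev _ _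
  have hm : ‖m‖ ^ 2 = (‖θs‖ ^ 2 + ‖θ'‖ ^ 2) / 2 - ‖θ' - θs‖ ^ 2 / 4 := by
    rw [h1, hrev]
    linear_combination (1/4) * hp
  have hA := hθs m
  have h2 := mul_le_mul_of_nonneg_left hconvsum hnn
  simp only [regObj] at hA ⊢
  have hm2 : lam / 2 * ‖m‖ ^ 2 =
      lam / 2 * ((‖θs‖ ^ 2 + ‖θ'‖ ^ 2) / 2 - ‖θ' - θs‖ ^ 2 / 4) := by rw [hm]
  nlinarith [hA, h2, hm2]

/-- **Stability of the regularized minimizer under database edits.** If each loss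
`ℓ(·;x)` is convex, differentiable and `L`-Lipschitz, and the databases `D, D'` differ in
at most `r` coordinates, then the global minimizers of `L_D` and `L_{D'}` satisfy
`‖θ*_{D'} − θ*_D‖ ≤ 4rL/(λn)`. -/
theorem minimizer_stability {d n r : ℕ} {lam L : ℝ} {X : Type*} [DecidableEq X]
    (hlam : 0 < lam) (hL : 0 < L) (hn : 0 < n)
    (ℓ : X → EuclideanSpace ℝ (Fin d) → ℝ)
    (hconv : ∀ x, ConvexOn ℝ Set.univ (ℓ x))
    (hdiff : ∀ x, Differentiable ℝ (ℓ x))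
    (hlip : ∀ x θ θ', |ℓ x θ - ℓ x θ'| ≤ L * ‖θ - θ'‖)
    (D D' : Fin n → X)
    (hedit : (Finset.univ.filter (fun i => D i ≠ D' i)).card ≤ r)
    (θs θs' : EuclideanSpace ℝ (Fin d))
    (hθs : ∀ θ, regObj lam ℓ D θs ≤ regObj lam ℓ D θ)
    (hθs' : ∀ θ, regObj lam ℓ D' θs' ≤ regObj lam ℓ D' θ) :
    ‖θs' - θs‖ ≤ 4 * r * L / (lam * n) := by
  set t := ‖θs' - θs‖ with htdef
  have hnR : (0:ℝ) < (n:ℝ) := by exact_mod_cast hn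
  have ht0 : 0 ≤ t := norm_nonneg _
  -- two strong-convexity inequalities
  have key1 := regObj_strong_min ℓ hconv D θs θs' hθs
  have key2 := regObj_strong_min ℓ hconv D' θs' θs hθs'
  have hrev : ‖θs - θs'‖ = t := norm_sub_rev _ _
  rw [hrev] at key2
  -- the sum of loss differences
  set T := ∑ i, ((ℓ (D i) θs' - ℓ (D i) θs) - (ℓ (D' i) θs' - ℓ (D' i) θs)) with hTdef
  have hAB : regObj lam ℓ D θs' - regObj lam ℓ D θs +
      (regObj lam ℓ D' θs - regObj lam ℓ D' θs') = (1 / (n:ℝ)) * T := by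
    simp only [regObj, hTdef, Finset.sum_sub_distrib]
    ring
  -- bound T
  have hTfilter : T = ∑ i ∈ Finset.univ.filter (fun i => D i ≠ D' i),
      ((ℓ (D i) θs' - ℓ (D i) θs) - (ℓ (D' i) θs' - ℓ (D' i) θs)) := by
    rw [hTdef]
    refine (Finset.sum_filter_of_ne fun i _ hne => ?_).symm
    intro heq
    apply hne
    rw [heq]
    ring
  have hTle : T ≤ 2 * r * L * t := by
    rw [hTfilter]
    calc ∑ i ∈ Finset.univ.filter (fun i => D i ≠ D' i),
          ((ℓ (D i) θs' - ℓ (D i) θs) - (ℓ (D' i) θs' - ℓ (D' i) θs))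
        ≤ ∑ _i ∈ Finset.univ.filter (fun i => D i ≠ D' i), 2 * L * t := by
          refine Finset.sum_le_sum fun i _ => ?_
          have h1 := abs_le.mp (hlip (D i) θs' θs)
          have h2 := abs_le.mp (hlip (D' i) θs' θs)
          rw [← htdef] at h1 h2
          linarith [h1.1, h1.2, h2.1, h2.2]
      _ = ((Finset.univ.filter (fun i => D i ≠ D' i)).card : ℝ) * (2 * L * t) := by
          rw [Finset.sum_const, nsmul_eq_mul]
      _ ≤ (r : ℝ) * (2 * L * t) := by
          have : ((Finset.univ.filter (fun i => D i ≠ D' i)).card : ℝ) ≤ (r : ℝ) := by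
            exact_mod_cast hedit
          exact mul_le_mul_of_nonneg_right this (by positivity)
      _ = 2 * r * L * t := by ring
  -- combine: lam/4 * t^2 ≤ (1/n) * T / 2 ≤ r L t / n
  have hmain : lam * (n:ℝ) * t ^ 2 ≤ 4 * r * L * t := by
    have hcomb : lam / 4 * t ^ 2 ≤ (1 / (n:ℝ)) * T / 2 := by linarith [key1, key2, hAB.le, hAB.ge]
    have h3 : (1 / (n:ℝ)) * T ≤ (1 / (n:ℝ)) * (2 * r * L * t) :=
      mul_le_mul_of_nonneg_left hTle (by positivity)
    have h4 : lam / 4 * t ^ 2 ≤ (1 / (n:ℝ)) * (2 * r * L * t) / 2 := by linarith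
    have h5 := mul_le_mul_of_nonneg_left h4 (le_of_lt (by positivity : (0:ℝ) < 4 * n))
    calc lam * (n:ℝ) * t ^ 2 = 4 * (n:ℝ) * (lam / 4 * t ^ 2) := by ring
      _ ≤ 4 * (n:ℝ) * ((1 / (n:ℝ)) * (2 * r * L * t) / 2) := h5
      _ = 4 * r * L * t := by field_simp
  rcases eq_or_lt_of_le ht0 with h | h
  · rw [← h]; positivity
  · rw [le_div_iff₀ (by positivity : (0:ℝ) < lam * n)]
    have : t * (lam * n) * t ≤ 4 * r * L * t := by nlinarith
    exact le_of_mul_le_mul_right this h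
end

section
/- Let λ, β, L > 0, let X be a set, and let ℓ(·;x): ℝ^d → ℝ be convex, differentiable, L-Lipschitz, and β-smooth for every x ∈ X. Let D, D' ∈ X^n be databases differing in at most r coordinates, with θ*_D, θ*_{D'} the global minimizers of L_D, L_{D'}. Then for every probability measure ρ on ℝ^d for which L_D and L_{D'} are integrable, ∫ L_{D'} dρ − L_{D'}(θ*_{D'}) ≤ (1 + β/λ) · ( 2 (∫ L_D dρ − L_D(θ*_D)) + 16 r² L² / (λ n²) ). -/
open MeasureTheory RealInnerProductSpace Filter Topology

lemma combo_norm {E : Type*} [NormedAddCommGroup E] [InnerProductSpace ℝ E]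
    (m θ : E) (t : ℝ) :
    ‖(1-t)•m + t•θ‖^2 = (1-t)*‖m‖^2 + t*‖θ‖^2 - (1-t)*t*‖θ-m‖^2 := by
  have h : ∀ x : E, ‖x‖^2 = ⟪x, x⟫ := fun x => (real_inner_self_eq_norm_sq x).symm
  rw [h, h, h, h]
  simp only [inner_add_left, inner_add_right, inner_sub_left, inner_sub_right,
    real_inner_smul_left, real_inner_smul_right]
  ring_nf

lemma strong_aux {d n : ℕ} {X : Type*} {lam : ℝ} (hlam : 0 < lam)
    (ℓ : X → EuclideanSpace ℝ (Fin d) → ℝ)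
    (hconv : ∀ x, ConvexOn ℝ Set.univ (ℓ x))
    (D : Fin n → X) (m : EuclideanSpace ℝ (Fin d))
    (hm : ∀ θ, regObj lam ℓ D m ≤ regObj lam ℓ D θ)
    (θ : EuclideanSpace ℝ (Fin d)) :
    regObj lam ℓ D m + lam/2 * ‖θ - m‖^2 ≤ regObj lam ℓ D θ := by
  have key : ∀ t ∈ Set.Ioo (0:ℝ) 1,
      regObj lam ℓ D m + lam/2 * (1-t) * ‖θ - m‖^2 ≤ regObj lam ℓ D θ := by
    intro t ht
    obtain ⟨ht0, ht1⟩ := ht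
    have hsum : ∑ i, ℓ (D i) ((1-t)•m + t•θ)
        ≤ (1-t) * ∑ i, ℓ (D i) m + t * ∑ i, ℓ (D i) θ := by
      rw [Finset.mul_sum, Finset.mul_sum, ← Finset.sum_add_distrib]
      exact Finset.sum_le_sum fun i _ =>
        (hconv (D i)).2 (Set.mem_univ m) (Set.mem_univ θ) (by linarith) (le_of_lt ht0)
          (by ring)
    have hnrm := combo_norm m θ t
    have hinv : (0:ℝ) ≤ 1/(n:ℝ) := by positivity
    have hz_le : regObj lam ℓ D ((1-t)•m + t•θ)
        ≤ (1-t) * regObj lam ℓ D m + t * regObj lam ℓ D θ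
          - lam/2 * ((1-t)*t) * ‖θ - m‖^2 := by
      have h1 : (1/(n:ℝ)) * ∑ i, ℓ (D i) ((1-t)•m + t•θ)
          ≤ (1/(n:ℝ)) * ((1-t) * ∑ i, ℓ (D i) m + t * ∑ i, ℓ (D i) θ) :=
        mul_le_mul_of_nonneg_left hsum hinv
      simp only [regObj]
      rw [hnrm]
      nlinarith [h1]
    have hmz := hm ((1-t)•m + t•θ)
    have h3 : t * (regObj lam ℓ D m + lam/2 * (1-t) * ‖θ - m‖^2)
        ≤ t * regObj lam ℓ D θ := by nlinarith
    exact le_of_mul_le_mul_left h3 ht0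
  have hten : Tendsto (fun t : ℝ => regObj lam ℓ D m + lam/2 * (1-t) * ‖θ - m‖^2)
      (𝓝[>] (0:ℝ)) (𝓝 (regObj lam ℓ D m + lam/2 * (1-(0:ℝ)) * ‖θ - m‖^2)) := by
    apply Tendsto.mono_left _ nhdsWithin_le_nhds
    exact Continuous.tendsto (by continuity) 0
  have hev : ∀ᶠ t in 𝓝[>] (0:ℝ),
      regObj lam ℓ D m + lam/2 * (1-t) * ‖θ - m‖^2 ≤ regObj lam ℓ D θ := by
    filter_upwards [Ioo_mem_nhdsGT_of_mem (Set.mem_Ico.mpr ⟨le_refl (0:ℝ), one_pos⟩)]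
      with t ht
    exact key t ht
  have := le_of_tendsto hten hev
  simpa using this

lemma G_lip {d n r : ℕ} {L : ℝ} {X : Type*} [DecidableEq X] (hL : 0 < L)
    {lam : ℝ} (ℓ : X → EuclideanSpace ℝ (Fin d) → ℝ)
    (hlip : ∀ x θ θ', |ℓ x θ - ℓ x θ'| ≤ L * ‖θ - θ'‖)
    (D D' : Fin n → X)
    (hedit : (Finset.univ.filter (fun i => D i ≠ D' i)).card ≤ r)
    (a b : EuclideanSpace ℝ (Fin d)) :
    regObj lam ℓ D' a - regObj lam ℓ D a - (regObj lam ℓ D' b - regObj lam ℓ D b)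
      ≤ (2*(r:ℝ)*L/(n:ℝ)) * ‖a - b‖ := by
  have heq : regObj lam ℓ D' a - regObj lam ℓ D a
      - (regObj lam ℓ D' b - regObj lam ℓ D b)
      = (1/(n:ℝ)) * ∑ i, (ℓ (D' i) a - ℓ (D i) a - (ℓ (D' i) b - ℓ (D i) b)) := by
    simp only [regObj, Finset.sum_sub_distrib]
    ring
  rw [heq]
  set f : Fin n → ℝ := fun i => ℓ (D' i) a - ℓ (D i) a - (ℓ (D' i) b - ℓ (D i) b) with hf
  have h1 : ∑ i, f i
      = ∑ i ∈ Finset.univ.filter (fun i => D i ≠ D' i), f i := by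
    refine (Finset.sum_filter_of_ne ?_).symm
    intro i _ hne
    intro h
    apply hne
    simp [hf, h]
  have hterm : ∀ i ∈ Finset.univ.filter (fun i => D i ≠ D' i),
      f i ≤ 2*L*‖a - b‖ := by
    intro i _
    have ha := hlip (D' i) a b
    have hb := hlip (D i) b a
    rw [norm_sub_rev] at hb
    have ha' := le_of_abs_le ha
    have hb' := le_of_abs_le hb
    simp only [hf]
    linarith
  have h2 : ∑ i ∈ Finset.univ.filter (fun i => D i ≠ D' i), f i
      ≤ ((Finset.univ.filter (fun i => D i ≠ D' i)).card : ℝ) * (2*L*‖a - b‖) := by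
    have := Finset.sum_le_card_nsmul _ _ _ hterm
    rwa [nsmul_eq_mul] at this
  have hcard : ((Finset.univ.filter (fun i => D i ≠ D' i)).card : ℝ) ≤ (r:ℝ) :=
    Nat.cast_le.mpr hedit
  have h3 : ∑ i, f i ≤ (r:ℝ) * (2*L*‖a - b‖) := by
    rw [h1]
    calc _ ≤ _ := h2
    _ ≤ (r:ℝ) * (2*L*‖a - b‖) := by
        apply mul_le_mul_of_nonneg_right hcard
        positivity
  have hinv : (0:ℝ) ≤ 1/(n:ℝ) := by positivity
  calc (1/(n:ℝ)) * ∑ i, f i ≤ (1/(n:ℝ)) * ((r:ℝ) * (2*L*‖a - b‖)) :=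
        mul_le_mul_of_nonneg_left h3 hinv
    _ = (2*(r:ℝ)*L/(n:ℝ)) * ‖a - b‖ := by ring

/-- **Excess empirical risk after a database edit.** If each loss `ℓ(·;x)` is convex,
differentiable, `L`-Lipschitz and `β`-smooth, the databases `D, D'` differ in at most `r`
coordinates, and `θ*_D, θ*_{D'}` are the global minimizers of `L_D, L_{D'}`, then for
every probability measure `ρ` against which `L_D` and `L_{D'}` are integrable,
`∫ L_{D'} dρ − L_{D'}(θ*_{D'}) ≤ (1 + β/λ)(2(∫ L_D dρ − L_D(θ*_D)) + 16r²L²/(λn²))`. -/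
theorem excess_risk_after_edit {d n r : ℕ} {lam β L : ℝ} {X : Type*} [DecidableEq X]
    (hlam : 0 < lam) (hβ : 0 < β) (hL : 0 < L) (hn : 0 < n)
    (ℓ : X → EuclideanSpace ℝ (Fin d) → ℝ)
    (hconv : ∀ x, ConvexOn ℝ Set.univ (ℓ x))
    (hdiff : ∀ x, Differentiable ℝ (ℓ x))
    (hlip : ∀ x θ θ', |ℓ x θ - ℓ x θ'| ≤ L * ‖θ - θ'‖)
    (hsmooth : ∀ x θ θ', ‖gradient (ℓ x) θ - gradient (ℓ x) θ'‖ ≤ β * ‖θ - θ'‖)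
    (D D' : Fin n → X)
    (hedit : (Finset.univ.filter (fun i => D i ≠ D' i)).card ≤ r)
    (θs θs' : EuclideanSpace ℝ (Fin d))
    (hθs : ∀ θ, regObj lam ℓ D θs ≤ regObj lam ℓ D θ)
    (hθs' : ∀ θ, regObj lam ℓ D' θs' ≤ regObj lam ℓ D' θ)
    (ρ : Measure (EuclideanSpace ℝ (Fin d))) [IsProbabilityMeasure ρ]
    (hint : Integrable (regObj lam ℓ D) ρ) (hint' : Integrable (regObj lam ℓ D') ρ) :
    (∫ θ, regObj lam ℓ D' θ ∂ρ) - regObj lam ℓ D' θs'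
      ≤ (1 + β / lam) *
        (2 * ((∫ θ, regObj lam ℓ D θ ∂ρ) - regObj lam ℓ D θs)
          + 16 * r ^ 2 * L ^ 2 / (lam * n ^ 2)) := by
  have hnR : (0:ℝ) < (n:ℝ) := Nat.cast_pos.mpr hn
  set K : ℝ := 2*(r:ℝ)*L/(n:ℝ) with hK
  have hK0 : 0 ≤ K := by positivity
  have hGab := G_lip hL (lam := lam) ℓ hlip D D' hedit
  have hsD := strong_aux hlam ℓ hconv D θs hθs
  have hsD' := strong_aux hlam ℓ hconv D' θs' hθs'
  -- distance between minimizers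
  have hdist : ‖θs - θs'‖ ≤ K / lam := by
    have h1 := hsD θs'
    have h2 := hsD' θs
    have h3 := hGab θs θs'
    rw [norm_sub_rev θs' θs] at h1
    have hy : 0 ≤ ‖θs - θs'‖ := norm_nonneg _
    have hsq : lam * ‖θs - θs'‖^2 ≤ K * ‖θs - θs'‖ := by linarith
    rcases eq_or_lt_of_le hy with h | h
    · rw [← h]; positivity
    · rw [le_div_iff₀ hlam]
      nlinarith
  -- pointwise bound
  have key : ∀ θ, regObj lam ℓ D' θ ≤ (3/2) * regObj lam ℓ D θ +
      (regObj lam ℓ D' θs' - (3/2) * regObj lam ℓ D θs + 2*(K^2/lam)) := by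
    intro θ
    have h1 := hsD θ
    have h2 := hGab θ θs'
    rw [← hK] at h2
    have h3 := hθs θs'
    have htri : ‖θ - θs'‖ ≤ ‖θ - θs‖ + ‖θs - θs'‖ := norm_sub_le_norm_sub_add_norm_sub _ _ _
    have hamgm : K * ‖θ - θs‖ ≤ lam/4 * ‖θ - θs‖^2 + K^2/lam := by
      have : K * ‖θ - θs‖ - lam/4 * ‖θ - θs‖^2 ≤ K^2/lam := by
        rw [le_div_iff₀ hlam]
        nlinarith [sq_nonneg (lam * ‖θ - θs‖ - 2*K)]
      linarith
    have hKd : K * ‖θs - θs'‖ ≤ K^2/lam := by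
      calc K * ‖θs - θs'‖ ≤ K * (K/lam) := mul_le_mul_of_nonneg_left hdist hK0
        _ = K^2/lam := by ring
    have hKtri : K * ‖θ - θs'‖ ≤ K * ‖θ - θs‖ + K * ‖θs - θs'‖ := by
      have := mul_le_mul_of_nonneg_left htri hK0
      linarith [this]
    linarith
  -- integration
  set C : ℝ := regObj lam ℓ D' θs' - (3/2) * regObj lam ℓ D θs + 2*(K^2/lam) with hC
  have hintR : Integrable (fun θ => (3/2) * regObj lam ℓ D θ + C) ρ :=
    (hint.const_mul _).add (integrable_const C)
  have hmono : (∫ θ, regObj lam ℓ D' θ ∂ρ)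
      ≤ ∫ θ, ((3/2) * regObj lam ℓ D θ + C) ∂ρ :=
    integral_mono hint' hintR key
  have hiR : (∫ θ, ((3/2) * regObj lam ℓ D θ + C) ∂ρ)
      = (3/2) * (∫ θ, regObj lam ℓ D θ ∂ρ) + C := by
    rw [integral_add (hint.const_mul _) (integrable_const C), integral_const_mul,
      integral_const]
    simp
  have hE0 : regObj lam ℓ D θs ≤ ∫ θ, regObj lam ℓ D θ ∂ρ := by
    have := integral_mono (integrable_const (regObj lam ℓ D θs)) hint (fun θ => hθs θ)
    simpa using this
  -- final arithmetic
  have hEq : 16 * (r:ℝ)^2 * L^2 / (lam * (n:ℝ)^2) = 2 * (2*(K^2/lam)) := by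
    rw [hK]; field_simp; ring
  have hX : 0 ≤ 2 * ((∫ θ, regObj lam ℓ D θ ∂ρ) - regObj lam ℓ D θs)
      + 16 * (r:ℝ)^2 * L^2 / (lam * (n:ℝ)^2) := by
    have h16 : (0:ℝ) ≤ 16 * (r:ℝ)^2 * L^2 / (lam * (n:ℝ)^2) := by positivity
    linarith
  have hfac : (1:ℝ) ≤ 1 + β / lam := by
    have : 0 < β / lam := div_pos hβ hlam
    linarith
  have hmul := mul_le_mul_of_nonneg_right hfac hX
  have hQ0 : (0:ℝ) ≤ 2*(K^2/lam) := by positivity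
  push_cast
  push_cast at hmul hEq hX
  linarith
end
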